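/- With probability at least 1 − 2d²/n², for each i ≤ d, |λ_i(P) − n·λ_i(E[XX^⊤])| ≤ 2d²√(n log n), where λ_i denotes the i-th largest eigenvalue; moreover λ_i(P) = 0 for i > d. -/

import Mathlib

open Matrix MeasureTheory ProbabilityTheory
open scoped RealInnerProductSpace ENNReal

/-- The eigenvalues of a real symmetric matrix listed in decreasing order
(`eigDesc M 0` is the largest); junk value `0` if `M` is not symmetric. -/
noncomputable def eigDesc {n : ℕ} (M : Matrix (Fin n) (Fin n) ℝ) : Fin n → ℝ :=
  if h : M.IsHermitian then fun i => (h.eigenvalues ∘ Tuple.sort h.eigenvalues) i.rev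
  else 0

/-!
Write `P = B Bᴴ`, where `B` is the `n × d` matrix with rows `X l`. By Courant–Fischer, `B` maps
the span of the top `i + 1` eigenvectors of `Bᴴ B` injectively onto a space on which the
quadratic form of `B Bᴴ` is at least `λ_i(Bᴴ B)`; hence `P` and `Bᴴ B = ∑ₗ X l (X l)ᵀ` share
their top `d` eigenvalues, and the remaining eigenvalues of `P` vanish because `ker Bᴴ` has
codimension at most `d`. Each entry of `Bᴴ B - n M` is a sum of `n` i.i.d. centred variables
with values in an interval of length `2`, so by Hoeffding it exceeds `ε = 2d√(n log n)` with
probability at most `2 n^(-2d²) ≤ 2 / n²`. Outside these `d²` events the quadratic form of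
`Bᴴ B - n M` is at most `d ε ‖x‖²` in absolute value, and Weyl's inequality gives
`|λ_i(P) - n λ_i(M)| ≤ d ε`.
-/

open scoped NNReal

section Orthonormal

variable {ι E : Type*} [Fintype ι] [NormedAddCommGroup E] [InnerProductSpace ℝ E]
  (b : OrthonormalBasis ι ℝ E)

lemma OrthonormalBasis.real_inner_eq_sum_repr_mul_repr (x y : E) :
    ⟪x, y⟫ = ∑ i, b.repr x i * b.repr y i := by
  rw [← b.repr.inner_map_map x y, PiLp.inner_apply]
  simp only [RCLike.inner_apply, conj_trivial, mul_comm]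

lemma OrthonormalBasis.norm_sq_eq_sum_repr_sq (x : E) : ‖x‖ ^ 2 = ∑ i, b.repr x i ^ 2 := by
  rw [← b.repr.norm_map, EuclideanSpace.real_norm_sq_eq]

lemma OrthonormalBasis.repr_eq_zero_of_mem_span_image {s : Set ι} {x : E}
    (hx : x ∈ Submodule.span ℝ (b '' s)) {j : ι} (hj : j ∉ s) : b.repr x j = 0 := by
  rw [← b.coe_toBasis, Module.Basis.mem_span_image] at hx
  simpa [b.coe_toBasis_repr_apply] using mt (@hx j) hj

lemma OrthonormalBasis.finrank_span_image (s : Set ι) [Fintype s] :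
    Module.finrank ℝ (Submodule.span ℝ (b '' s)) = Fintype.card s := by
  rw [Set.image_eq_range]
  exact finrank_span_eq_card (b.orthonormal.linearIndependent.comp _ Subtype.val_injective)

end Orthonormal

lemma Submodule.exists_mem_mem_ne_zero_of_finrank_lt_add {K V : Type*} [DivisionRing K]
    [AddCommGroup V] [Module K V] [FiniteDimensional K V] {p q : Submodule K V}
    (h : Module.finrank K V < Module.finrank K p + Module.finrank K q) :
    ∃ x ∈ p, x ∈ q ∧ x ≠ 0 := by
  by_contra! hpq
  exact h.not_ge (Submodule.finrank_add_finrank_le_of_disjoint (Submodule.disjoint_def.2 hpq))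

namespace Matrix.IsHermitian

variable {m : ℕ} {A : Matrix (Fin m) (Fin m) ℝ}

noncomputable def eigDescPerm (hA : A.IsHermitian) : Equiv.Perm (Fin m) :=
  Fin.revPerm.trans (Tuple.sort hA.eigenvalues)

lemma eigDesc_eq (hA : A.IsHermitian) (i : Fin m) :
    eigDesc A i = hA.eigenvalues (hA.eigDescPerm i) := by
  rw [eigDesc, dif_pos hA]; rfl

lemma eigDesc_antitone (hA : A.IsHermitian) : Antitone (eigDesc A) := by
  intro i j hij
  rw [hA.eigDesc_eq, hA.eigDesc_eq]
  exact Tuple.monotone_sort hA.eigenvalues (Fin.rev_le_rev.mpr hij)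

noncomputable def sortedEigenbasis (hA : A.IsHermitian) :
    OrthonormalBasis (Fin m) ℝ (EuclideanSpace ℝ (Fin m)) :=
  hA.eigenvectorBasis.reindex hA.eigDescPerm.symm

lemma toEuclideanLin_sortedEigenbasis (hA : A.IsHermitian) (i : Fin m) :
    toEuclideanLin A (hA.sortedEigenbasis i) = eigDesc A i • hA.sortedEigenbasis i := by
  rw [toLpLin_apply, sortedEigenbasis, OrthonormalBasis.reindex_apply, Equiv.symm_symm,
    hA.mulVec_eigenvectorBasis, hA.eigDesc_eq]
  simp

lemma sortedEigenbasis_repr_toEuclideanLin (hA : A.IsHermitian) (x : EuclideanSpace ℝ (Fin m))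
    (i : Fin m) :
    hA.sortedEigenbasis.repr (toEuclideanLin A x) i =
      eigDesc A i * hA.sortedEigenbasis.repr x i := by
  rw [OrthonormalBasis.repr_apply_apply, OrthonormalBasis.repr_apply_apply,
    ← (isSymmetric_toEuclideanLin_iff.mpr hA) _ x, toEuclideanLin_sortedEigenbasis,
    real_inner_smul_left]

lemma inner_toEuclideanLin_self_eq_sum (hA : A.IsHermitian) (x : EuclideanSpace ℝ (Fin m)) :
    ⟪x, toEuclideanLin A x⟫ = ∑ i, eigDesc A i * hA.sortedEigenbasis.repr x i ^ 2 := by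
  simp only [hA.sortedEigenbasis.real_inner_eq_sum_repr_mul_repr,
    sortedEigenbasis_repr_toEuclideanLin]
  exact Finset.sum_congr rfl fun i _ => by ring

lemma norm_toEuclideanLin_sq_eq_sum (hA : A.IsHermitian) (x : EuclideanSpace ℝ (Fin m)) :
    ‖toEuclideanLin A x‖ ^ 2 = ∑ i, eigDesc A i ^ 2 * hA.sortedEigenbasis.repr x i ^ 2 := by
  simp only [hA.sortedEigenbasis.norm_sq_eq_sum_repr_sq, sortedEigenbasis_repr_toEuclideanLin,
    mul_pow]

noncomputable def topEigenspan (hA : A.IsHermitian) (i : Fin m) :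
    Submodule ℝ (EuclideanSpace ℝ (Fin m)) :=
  Submodule.span ℝ (hA.sortedEigenbasis '' Set.Iic i)

noncomputable def bottomEigenspan (hA : A.IsHermitian) (i : Fin m) :
    Submodule ℝ (EuclideanSpace ℝ (Fin m)) :=
  Submodule.span ℝ (hA.sortedEigenbasis '' Set.Ici i)

lemma finrank_topEigenspan (hA : A.IsHermitian) (i : Fin m) :
    Module.finrank ℝ (hA.topEigenspan i) = i + 1 := by
  rw [topEigenspan, OrthonormalBasis.finrank_span_image, Fintype.card_Iic, Fin.card_Iic]

lemma finrank_bottomEigenspan (hA : A.IsHermitian) (i : Fin m) :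
    Module.finrank ℝ (hA.bottomEigenspan i) = m - i := by
  rw [bottomEigenspan, OrthonormalBasis.finrank_span_image, Fintype.card_Ici, Fin.card_Ici]

lemma eigDesc_mul_norm_sq_le_of_mem_topEigenspan (hA : A.IsHermitian) {i : Fin m}
    {x : EuclideanSpace ℝ (Fin m)} (hx : x ∈ hA.topEigenspan i) :
    eigDesc A i * ‖x‖ ^ 2 ≤ ⟪x, toEuclideanLin A x⟫ := by
  rw [hA.inner_toEuclideanLin_self_eq_sum, hA.sortedEigenbasis.norm_sq_eq_sum_repr_sq,
    Finset.mul_sum]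
  refine Finset.sum_le_sum fun j _ => ?_
  by_cases hj : j ∈ Set.Iic i
  · exact mul_le_mul_of_nonneg_right (hA.eigDesc_antitone hj) (sq_nonneg _)
  · simp [hA.sortedEigenbasis.repr_eq_zero_of_mem_span_image hx hj]

lemma inner_le_eigDesc_mul_norm_sq_of_mem_bottomEigenspan (hA : A.IsHermitian) {i : Fin m}
    {x : EuclideanSpace ℝ (Fin m)} (hx : x ∈ hA.bottomEigenspan i) :
    ⟪x, toEuclideanLin A x⟫ ≤ eigDesc A i * ‖x‖ ^ 2 := by
  rw [hA.inner_toEuclideanLin_self_eq_sum, hA.sortedEigenbasis.norm_sq_eq_sum_repr_sq,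
    Finset.mul_sum]
  refine Finset.sum_le_sum fun j _ => ?_
  by_cases hj : j ∈ Set.Ici i
  · exact mul_le_mul_of_nonneg_right (hA.eigDesc_antitone hj) (sq_nonneg _)
  · simp [hA.sortedEigenbasis.repr_eq_zero_of_mem_span_image hx hj]

lemma eigDesc_mul_inner_le_norm_sq_of_mem_topEigenspan (hA : A.IsHermitian) {i : Fin m}
    (hi : 0 ≤ eigDesc A i) {x : EuclideanSpace ℝ (Fin m)} (hx : x ∈ hA.topEigenspan i) :
    eigDesc A i * ⟪x, toEuclideanLin A x⟫ ≤ ‖toEuclideanLin A x‖ ^ 2 := by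
  rw [hA.inner_toEuclideanLin_self_eq_sum, hA.norm_toEuclideanLin_sq_eq_sum, Finset.mul_sum]
  refine Finset.sum_le_sum fun j _ => ?_
  by_cases hj : j ∈ Set.Iic i
  · have hij : eigDesc A i ≤ eigDesc A j := hA.eigDesc_antitone hj
    rw [← mul_assoc, sq (eigDesc A j)]
    gcongr
    exact hi.trans hij
  · simp [hA.sortedEigenbasis.repr_eq_zero_of_mem_span_image hx hj]

lemma le_eigDesc_of_forall_le_inner (hA : A.IsHermitian) (i : Fin m) {r : ℝ}
    (V : Submodule ℝ (EuclideanSpace ℝ (Fin m))) (hV : Module.finrank ℝ V = i + 1)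
    (h : ∀ x ∈ V, r * ‖x‖ ^ 2 ≤ ⟪x, toEuclideanLin A x⟫) : r ≤ eigDesc A i := by
  obtain ⟨x, hxV, hxW, hx0⟩ := Submodule.exists_mem_mem_ne_zero_of_finrank_lt_add
    (p := V) (q := hA.bottomEigenspan i) (by
      rw [hV, hA.finrank_bottomEigenspan, finrank_euclideanSpace_fin]; omega)
  have hx : 0 < ‖x‖ ^ 2 := by positivity
  exact le_of_mul_le_mul_right
    ((h x hxV).trans (hA.inner_le_eigDesc_mul_norm_sq_of_mem_bottomEigenspan hxW)) hx

lemma eigDesc_le_of_forall_inner_le (hA : A.IsHermitian) (i : Fin m) {r : ℝ}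
    (W : Submodule ℝ (EuclideanSpace ℝ (Fin m))) (hW : m ≤ Module.finrank ℝ W + i)
    (h : ∀ x ∈ W, ⟪x, toEuclideanLin A x⟫ ≤ r * ‖x‖ ^ 2) : eigDesc A i ≤ r := by
  obtain ⟨x, hxV, hxW, hx0⟩ := Submodule.exists_mem_mem_ne_zero_of_finrank_lt_add
    (p := hA.topEigenspan i) (q := W) (by
      rw [hA.finrank_topEigenspan, finrank_euclideanSpace_fin]; omega)
  have hx : 0 < ‖x‖ ^ 2 := by positivity
  exact le_of_mul_le_mul_right
    ((hA.eigDesc_mul_norm_sq_le_of_mem_topEigenspan hxV).trans (h x hxW)) hx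

lemma eigDesc_le_eigDesc_add (hA : A.IsHermitian) {B : Matrix (Fin m) (Fin m) ℝ}
    (hB : B.IsHermitian) {C : ℝ}
    (hAB : ∀ x, ⟪x, toEuclideanLin (A - B) x⟫ ≤ C * ‖x‖ ^ 2) (i : Fin m) :
    eigDesc A i ≤ eigDesc B i + C := by
  refine hA.eigDesc_le_of_forall_inner_le i (hB.bottomEigenspan i)
    (by rw [hB.finrank_bottomEigenspan]; omega) fun x hx => ?_
  have hsplit : ⟪x, toEuclideanLin A x⟫ =
      ⟪x, toEuclideanLin B x⟫ + ⟪x, toEuclideanLin (A - B) x⟫ := by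
    rw [map_sub, LinearMap.sub_apply, inner_sub_right]; ring
  rw [hsplit, add_mul]
  exact add_le_add (hB.inner_le_eigDesc_mul_norm_sq_of_mem_bottomEigenspan hx) (hAB x)

lemma abs_eigDesc_sub_eigDesc_le (hA : A.IsHermitian) {B : Matrix (Fin m) (Fin m) ℝ}
    (hB : B.IsHermitian) {C : ℝ}
    (hAB : ∀ x, |⟪x, toEuclideanLin (A - B) x⟫| ≤ C * ‖x‖ ^ 2) (i : Fin m) :
    |eigDesc A i - eigDesc B i| ≤ C := by
  have hBA : ∀ x, ⟪x, toEuclideanLin (B - A) x⟫ ≤ C * ‖x‖ ^ 2 := fun x => by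
    rw [← neg_sub, map_neg, LinearMap.neg_apply, inner_neg_right]
    exact (neg_le_abs _).trans (hAB x)
  rw [abs_sub_le_iff]
  constructor
  · linarith [hA.eigDesc_le_eigDesc_add hB (fun x => (le_abs_self _).trans (hAB x)) i]
  · linarith [hB.eigDesc_le_eigDesc_add hA hBA i]

lemma eigDesc_smul (hA : A.IsHermitian) {c : ℝ} (hc : 0 ≤ c) (i : Fin m) :
    eigDesc (c • A) i = c * eigDesc A i := by
  have hcA : (c • A).IsHermitian := hA.smul (IsSelfAdjoint.all c)
  have hq (x : EuclideanSpace ℝ (Fin m)) :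
      ⟪x, toEuclideanLin (c • A) x⟫ = c * ⟪x, toEuclideanLin A x⟫ := by
    rw [map_smul, LinearMap.smul_apply, inner_smul_right]
  refine le_antisymm (hcA.eigDesc_le_of_forall_inner_le i (hA.bottomEigenspan i)
    (by rw [hA.finrank_bottomEigenspan]; omega) fun x hx => ?_)
    (hcA.le_eigDesc_of_forall_le_inner i (hA.topEigenspan i) (hA.finrank_topEigenspan i)
      fun x hx => ?_)
  · rw [hq, mul_assoc]
    exact mul_le_mul_of_nonneg_left
      (hA.inner_le_eigDesc_mul_norm_sq_of_mem_bottomEigenspan hx) hc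
  · rw [hq, mul_assoc]
    exact mul_le_mul_of_nonneg_left (hA.eigDesc_mul_norm_sq_le_of_mem_topEigenspan hx) hc

end Matrix.IsHermitian

namespace Matrix

variable {n d : ℕ} (B : Matrix (Fin n) (Fin d) ℝ)

lemma toEuclideanLin_mul_apply {k : ℕ} (C : Matrix (Fin d) (Fin k) ℝ)
    (x : EuclideanSpace ℝ (Fin k)) :
    toEuclideanLin (B * C) x = toEuclideanLin B (toEuclideanLin C x) := by
  simp [toLpLin_apply, mulVec_mulVec]

lemma inner_toEuclideanLin_mul_conjTranspose_self (x : EuclideanSpace ℝ (Fin n)) :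
    ⟪x, toEuclideanLin (B * Bᴴ) x⟫ = ‖toEuclideanLin Bᴴ x‖ ^ 2 := by
  rw [toEuclideanLin_mul_apply, ← real_inner_self_eq_norm_sq,
    toEuclideanLin_conjTranspose_eq_adjoint, LinearMap.adjoint_inner_left]

lemma eigDesc_mul_conjTranspose_self_nonneg (i : Fin n) : 0 ≤ eigDesc (B * Bᴴ) i := by
  rw [(isHermitian_mul_conjTranspose_self B).eigDesc_eq]
  exact eigenvalues_self_mul_conjTranspose_nonneg B _

lemma eigDesc_conjTranspose_mul_self_le {i : ℕ} (hin : i < n) (hid : i < d) :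
    eigDesc (Bᴴ * B) ⟨i, hid⟩ ≤ eigDesc (B * Bᴴ) ⟨i, hin⟩ := by
  set j : Fin d := ⟨i, hid⟩
  have hQ : (Bᴴ * B).IsHermitian := isHermitian_conjTranspose_mul_self B
  have hQB : ∀ x, ⟪x, toEuclideanLin (Bᴴ * B) x⟫ = ‖toEuclideanLin B x‖ ^ 2 := by
    simpa using inner_toEuclideanLin_mul_conjTranspose_self Bᴴ
  rcases le_or_gt (eigDesc (Bᴴ * B) j) 0 with hj | hj
  · exact hj.trans (eigDesc_mul_conjTranspose_self_nonneg B _)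
  set V := hQ.topEigenspan j
  have hinj : Function.Injective ((toEuclideanLin B).domRestrict V) := by
    rw [injective_iff_map_eq_zero]
    rintro ⟨x, hx⟩ hBx
    have hle := hQ.eigDesc_mul_norm_sq_le_of_mem_topEigenspan hx
    rw [hQB, show toEuclideanLin B x = 0 from hBx, norm_zero] at hle
    have : ‖x‖ ^ 2 ≤ 0 := by nlinarith
    simpa using this
  refine (isHermitian_mul_conjTranspose_self B).le_eigDesc_of_forall_le_inner _
    (V.map (toEuclideanLin B))
    (by rw [← LinearMap.range_domRestrict, LinearMap.finrank_range_of_inj hinj,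
      hQ.finrank_topEigenspan]) ?_
  rintro _ ⟨x, hx, rfl⟩
  rw [inner_toEuclideanLin_mul_conjTranspose_self, ← toEuclideanLin_mul_apply, ← hQB]
  exact hQ.eigDesc_mul_inner_le_norm_sq_of_mem_topEigenspan hj.le hx

lemma eigDesc_mul_conjTranspose_self_eq {i : ℕ} (hin : i < n) (hid : i < d) :
    eigDesc (B * Bᴴ) ⟨i, hin⟩ = eigDesc (Bᴴ * B) ⟨i, hid⟩ := by
  refine le_antisymm ?_ (eigDesc_conjTranspose_mul_self_le B hin hid)
  simpa using eigDesc_conjTranspose_mul_self_le Bᴴ hid hin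

lemma eigDesc_mul_conjTranspose_self_eq_zero (i : Fin n) (hi : d ≤ i) :
    eigDesc (B * Bᴴ) i = 0 := by
  refine le_antisymm ?_ (eigDesc_mul_conjTranspose_self_nonneg B i)
  refine (isHermitian_mul_conjTranspose_self B).eigDesc_le_of_forall_inner_le i
    (LinearMap.ker (toEuclideanLin Bᴴ)) ?_ fun x hx => ?_
  · have hrank := LinearMap.finrank_range_add_finrank_ker (toEuclideanLin (𝕜 := ℝ) Bᴴ)
    have hrange := (LinearMap.range (toEuclideanLin (𝕜 := ℝ) Bᴴ)).finrank_le
    rw [finrank_euclideanSpace_fin] at hrank hrange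
    omega
  · rw [inner_toEuclideanLin_mul_conjTranspose_self, LinearMap.mem_ker.mp hx]
    simp

lemma abs_inner_toEuclideanLin_self_le {ι : Type*} [Fintype ι] [DecidableEq ι]
    (E : Matrix ι ι ℝ) {ε : ℝ} (hε : 0 ≤ ε) (hE : ∀ a b, |E a b| ≤ ε)
    (x : EuclideanSpace ℝ ι) :
    |⟪x, toEuclideanLin E x⟫| ≤ Fintype.card ι * ε * ‖x‖ ^ 2 := by
  have hinner : ⟪x, toEuclideanLin E x⟫ = ∑ a, ∑ b, x a * E a b * x b := by
    simp [toLpLin_apply, PiLp.inner_apply, mulVec, dotProduct, Finset.mul_sum, mul_assoc,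
      mul_comm, mul_left_comm]
  have hcs : (∑ a, |x a|) ^ 2 ≤ Fintype.card ι * ‖x‖ ^ 2 := by
    simpa [EuclideanSpace.real_norm_sq_eq] using
      sq_sum_le_card_mul_sum_sq (s := Finset.univ) (f := fun a => |x a|)
  calc |⟪x, toEuclideanLin E x⟫|
      ≤ ∑ a, ∑ b, |x a| * ε * |x b| := by
        rw [hinner]
        refine (Finset.abs_sum_le_sum_abs _ _).trans (Finset.sum_le_sum fun a _ => ?_)
        refine (Finset.abs_sum_le_sum_abs _ _).trans (Finset.sum_le_sum fun b _ => ?_)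
        rw [abs_mul, abs_mul]
        gcongr
        exact hE a b
    _ = ε * (∑ a, |x a|) ^ 2 := by
        simp only [sq, Finset.sum_mul, Finset.mul_sum]
        exact Finset.sum_congr rfl fun a _ => Finset.sum_congr rfl fun b _ => by ring
    _ ≤ Fintype.card ι * ε * ‖x‖ ^ 2 := by nlinarith

lemma abs_eigDesc_mul_conjTranspose_self_sub_le (B : Matrix (Fin n) (Fin d) ℝ)
    {N : Matrix (Fin d) (Fin d) ℝ} (hN : N.IsHermitian) {ε : ℝ}
    (hBN : ∀ a b, |(Bᴴ * B - N) a b| ≤ ε) {i : ℕ} (hin : i < n) (hid : i < d) :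
    |eigDesc (B * Bᴴ) ⟨i, hin⟩ - eigDesc N ⟨i, hid⟩| ≤ d * ε := by
  have hε : 0 ≤ ε := (abs_nonneg _).trans (hBN ⟨i, hid⟩ ⟨i, hid⟩)
  rw [eigDesc_mul_conjTranspose_self_eq B hin hid]
  simpa using (isHermitian_conjTranspose_mul_self B).abs_eigDesc_sub_eigDesc_le hN
    (fun x => abs_inner_toEuclideanLin_self_le _ hε hBN x) ⟨i, hid⟩

lemma gram_eq_mul_conjTranspose (Y : Fin n → EuclideanSpace ℝ (Fin d)) :
    gram ℝ Y = of (fun l a => Y l a) * (of fun l a => Y l a)ᴴ := by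
  ext k l
  simp [gram_apply, mul_apply, PiLp.inner_apply, mul_comm]

lemma abs_eigDesc_gram_sub_natCast_mul_le (Y : Fin n → EuclideanSpace ℝ (Fin d))
    {M : Matrix (Fin d) (Fin d) ℝ} (hM : M.IsHermitian) {ε : ℝ}
    (hYM : ∀ a b, |∑ l, (Y l a * Y l b - M a b)| ≤ ε) (i : Fin n) (hid : (i : ℕ) < d) :
    |eigDesc (gram ℝ Y) i - n * eigDesc M ⟨i, hid⟩| ≤ d * ε := by
  rw [gram_eq_mul_conjTranspose, ← hM.eigDesc_smul (Nat.cast_nonneg n)]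
  refine abs_eigDesc_mul_conjTranspose_self_sub_le _ (hM.smul (IsSelfAdjoint.all _))
    (fun a b => ?_) i.isLt hid
  simpa [mul_apply, Finset.sum_sub_distrib] using hYM a b

lemma eigDesc_gram_eq_zero (Y : Fin n → EuclideanSpace ℝ (Fin d)) (i : Fin n)
    (hi : d ≤ (i : ℕ)) : eigDesc (gram ℝ Y) i = 0 := by
  rw [gram_eq_mul_conjTranspose]
  exact eigDesc_mul_conjTranspose_self_eq_zero _ i hi

end Matrix

namespace ProbabilityTheory

lemma HasSubgaussianMGF.measureReal_abs_ge_le {Ω : Type*} [MeasurableSpace Ω] {μ : Measure Ω}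
    [IsFiniteMeasure μ] {X : Ω → ℝ} {c : ℝ≥0} (h : HasSubgaussianMGF X c μ) {ε : ℝ}
    (hε : 0 ≤ ε) : μ.real {ω | ε ≤ |X ω|} ≤ 2 * Real.exp (-ε ^ 2 / (2 * c)) := by
  have hsplit : {ω | ε ≤ |X ω|} ⊆ {ω | ε ≤ X ω} ∪ {ω | ε ≤ (-X) ω} := by
    intro ω hω
    simpa [le_abs] using hω
  calc μ.real {ω | ε ≤ |X ω|}
      ≤ μ.real {ω | ε ≤ X ω} + μ.real {ω | ε ≤ (-X) ω} :=
        (measureReal_mono hsplit).trans (measureReal_union_le _ _)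
    _ ≤ 2 * Real.exp (-ε ^ 2 / (2 * c)) := by
        linarith [h.measure_ge_le hε, h.neg.measure_ge_le hε]

lemma measureReal_abs_sum_sub_integral_ge_le {Ω E ι : Type*} [MeasurableSpace Ω]
    [MeasurableSpace E] [Fintype ι] {μ : Measure Ω} [IsProbabilityMeasure μ]
    {X : ι → Ω → E} (hindep : iIndepFun X μ) {Y : Ω → E}
    (hident : ∀ l, IdentDistrib (X l) Y μ μ) {f : E → ℝ} (hf : Measurable f)
    (hbdd : ∀ l, ∀ᵐ ω ∂μ, f (X l ω) ∈ Set.Icc (-1) 1) {ε : ℝ} (hε : 0 ≤ ε) :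
    μ.real {ω | ε ≤ |∑ l, (f (X l ω) - ∫ ω, f (Y ω) ∂μ)|} ≤
      2 * Real.exp (-ε ^ 2 / (2 * Fintype.card ι)) := by
  have hsubG : ∀ l, HasSubgaussianMGF (fun ω => f (X l ω) - ∫ ω, f (Y ω) ∂μ) 1 μ := by
    intro l
    have h := hasSubgaussianMGF_of_mem_Icc (hf.comp_aemeasurable (hident l).aemeasurable_fst)
      (hbdd l)
    rw [((hident l).comp hf).integral_eq] at h
    have hc : (‖(1 : ℝ) - -1‖₊ / 2) ^ 2 = 1 := by
      rw [sub_neg_eq_add, one_add_one_eq_two, ← NNReal.coe_inj]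
      norm_num
    exact hc ▸ h
  have hindep' : iIndepFun (fun l ω => f (X l ω) - ∫ ω, f (Y ω) ∂μ) μ :=
    hindep.comp (fun _ v => f v - ∫ ω, f (Y ω) ∂μ) fun _ => hf.sub_const _
  simpa using (HasSubgaussianMGF.sum_of_iIndepFun hindep'
    (s := Finset.univ) fun l _ => hsubG l).measureReal_abs_ge_le hε

end ProbabilityTheory

lemma EuclideanSpace.abs_apply_mul_apply_le_norm_sq {ι : Type*} [Fintype ι]
    (v : EuclideanSpace ℝ ι) (a b : ι) : |v a * v b| ≤ ‖v‖ ^ 2 := by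
  rw [abs_mul, sq]
  exact mul_le_mul (by simpa using PiLp.norm_apply_le v a)
    (by simpa using PiLp.norm_apply_le v b) (abs_nonneg _) (norm_nonneg _)

lemma two_mul_exp_neg_sq_div_le {n d : ℕ} (hn : 0 < n) (hd : 0 < d) :
    2 * Real.exp (-(2 * d * √(n * Real.log n)) ^ 2 / (2 * n)) ≤ 2 / n ^ 2 := by
  have hn' : (0 : ℝ) < n := by exact_mod_cast hn
  have hd' : (1 : ℝ) ≤ d := by exact_mod_cast hd
  have hlog : 0 ≤ Real.log n := Real.log_natCast_nonneg n
  have hexp : -(2 * d * √(n * Real.log n)) ^ 2 / (2 * n) = -(2 * d ^ 2) * Real.log n := by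
    rw [mul_pow, Real.sq_sqrt (by positivity)]
    field_simp
  have hpow : Real.exp (-2 * Real.log n) = 1 / n ^ 2 := by
    rw [neg_mul, Real.exp_neg, ← Real.log_rpow hn', Real.exp_log (by positivity)]
    norm_num
  rw [hexp, ← mul_one_div, ← hpow]
  gcongr
  nlinarith

lemma measure_le_abs_sum_mul_sub_integral_le {Ω : Type*} [MeasurableSpace Ω]
    {μ : Measure Ω} [IsProbabilityMeasure μ] {n d : ℕ} (hn : 0 < n)
    {X : Fin n → Ω → EuclideanSpace ℝ (Fin d)} (hindep : iIndepFun X μ)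
    {Y : Ω → EuclideanSpace ℝ (Fin d)} (hident : ∀ l, IdentDistrib (X l) Y μ μ)
    (hball : ∀ l, ∀ᵐ ω ∂μ, ‖X l ω‖ ≤ 1) (a b : Fin d) :
    μ {ω | 2 * d * √(n * Real.log n) ≤
        |∑ l, (X l ω a * X l ω b - ∫ ω, Y ω a * Y ω b ∂μ)|} ≤ ENNReal.ofReal (2 / n ^ 2) := by
  have hbdd : ∀ l, ∀ᵐ ω ∂μ, X l ω a * X l ω b ∈ Set.Icc (-1) 1 := fun l => by
    filter_upwards [hball l] with ω hω
    exact abs_le.mp ((EuclideanSpace.abs_apply_mul_apply_le_norm_sq _ a b).trans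
      (pow_le_one₀ (norm_nonneg _) hω))
  have hhoeff := measureReal_abs_sum_sub_integral_ge_le hindep hident
    (f := fun v => v a * v b) (by fun_prop) hbdd (ε := 2 * d * √(n * Real.log n)) (by positivity)
  rw [Fintype.card_fin] at hhoeff
  rw [← ofReal_measureReal]
  exact ENNReal.ofReal_le_ofReal (hhoeff.trans (two_mul_exp_neg_sq_div_le hn a.pos))

lemma MeasureTheory.one_sub_le_measure_of_compl_subset {Ω : Type*} [MeasurableSpace Ω]
    {μ : Measure Ω} [IsProbabilityMeasure μ] {s t : Set Ω} (hts : tᶜ ⊆ s) {δ : ℝ≥0∞}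
    (ht : μ t ≤ δ) : 1 - δ ≤ μ s := by
  rw [tsub_le_iff_right, ← measure_univ (μ := μ)]
  calc μ Set.univ ≤ μ (s ∪ t) := measure_mono fun ω _ => or_iff_not_imp_right.2 (@hts ω)
    _ ≤ μ s + δ := (measure_union_le s t).trans (by gcongr)

theorem eigenvalues_of_P_concentrate_general {Ω : Type*} [MeasurableSpace Ω]
    (μ : Measure Ω) [IsProbabilityMeasure μ] {n d : ℕ} (hn : 0 < n)
    (X : Fin n → Ω → EuclideanSpace ℝ (Fin d))
    (hindep : iIndepFun X μ)
    (hident : ∀ l, IdentDistrib (X l) (X ⟨0, hn⟩) μ μ)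
    (hball : ∀ l, ∀ᵐ ω ∂μ, ‖X l ω‖ ≤ 1)
    (M : Matrix (Fin d) (Fin d) ℝ)
    (hM : ∀ a b, M a b = ∫ ω, X ⟨0, hn⟩ ω a * X ⟨0, hn⟩ ω b ∂μ) :
    (1 : ℝ≥0∞) - ENNReal.ofReal (2 * d ^ 2 / n ^ 2) ≤
      μ {ω |
        (∀ i : Fin n, ∀ h : (i : ℕ) < d,
          |eigDesc (Matrix.of fun a b : Fin n => ⟪X a ω, X b ω⟫) i -
              (n : ℝ) * eigDesc M ⟨i, h⟩| ≤ 2 * d ^ 2 * Real.sqrt (n * Real.log n)) ∧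
        (∀ i : Fin n, d ≤ (i : ℕ) →
          eigDesc (Matrix.of fun a b : Fin n => ⟪X a ω, X b ω⟫) i = 0)} := by
  set ε := 2 * d * √(n * Real.log n)
  have hM_herm : M.IsHermitian := by
    ext a b
    simp only [conjTranspose_apply, star_trivial, hM, mul_comm]
  let bad : Fin d × Fin d → Set Ω := fun p =>
    {ω | ε ≤ |∑ l, (X l ω p.1 * X l ω p.2 - M p.1 p.2)|}
  have hbad : ∀ p, μ (bad p) ≤ ENNReal.ofReal (2 / n ^ 2) := fun ⟨a, b⟩ => by
    simpa only [bad, hM] using measure_le_abs_sum_mul_sub_integral_le hn hindep hident hball a b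
  refine one_sub_le_measure_of_compl_subset (t := ⋃ p, bad p) (fun ω hω => ?_) ?_
  · simp only [Set.mem_compl_iff, Set.mem_iUnion, not_exists, Set.mem_ofPred_eq, not_le,
      bad] at hω
    refine ⟨fun i hi => ?_, fun i hi => eigDesc_gram_eq_zero (fun l => X l ω) i hi⟩
    exact (abs_eigDesc_gram_sub_natCast_mul_le (fun l => X l ω) hM_herm
      (fun a b => (hω (a, b)).le) i hi).trans_eq (by ring)
  · calc μ (⋃ p, bad p) ≤ ∑ p, μ (bad p) := measure_iUnion_fintype_le μ bad
      _ ≤ (d * d : ℕ) * ENNReal.ofReal (2 / n ^ 2) := by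
        simpa using Finset.sum_le_card_nsmul Finset.univ _ _ fun p _ => hbad p
      _ = ENNReal.ofReal (2 * d ^ 2 / n ^ 2) := by
        rw [← ENNReal.ofReal_natCast, ← ENNReal.ofReal_mul (by positivity)]
        congr 1
        push_cast
        ring

/-- with probability at least `1 − 2d²/n²`, for each `i ≤ d`,
`|λ_i(P) − n λ_i(E[XXᵀ])| ≤ 2d²√(n log n)`, and `λ_i(P) = 0` for `i > d`,
where `P = XXᵀ` is the Gram matrix of `n` i.i.d. latent vectors in the unit ball. -/
theorem eigenvalues_of_P_concentrate {Ω : Type*} [MeasurableSpace Ω]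
    (μ : Measure Ω) [IsProbabilityMeasure μ] {n d : ℕ} (hd : d ≤ n) (hn : 0 < n)
    (X : Fin n → Ω → EuclideanSpace ℝ (Fin d))
    (hmeas : ∀ l, Measurable (X l))
    (hindep : iIndepFun X μ)
    (hident : ∀ l, IdentDistrib (X l) (X ⟨0, hn⟩) μ μ)
    (hball : ∀ l, ∀ᵐ ω ∂μ, ‖X l ω‖ ≤ 1)
    (M : Matrix (Fin d) (Fin d) ℝ)
    (hM : ∀ a b, M a b = ∫ ω, X ⟨0, hn⟩ ω a * X ⟨0, hn⟩ ω b ∂μ)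
    (hrank : M.rank = d) :
    (1 : ℝ≥0∞) - ENNReal.ofReal (2 * d ^ 2 / n ^ 2) ≤
      μ {ω |
        (∀ i : Fin n, ∀ h : (i : ℕ) < d,
          |eigDesc (Matrix.of fun a b : Fin n => ⟪X a ω, X b ω⟫) i -
              (n : ℝ) * eigDesc M ⟨i, h⟩| ≤ 2 * d ^ 2 * Real.sqrt (n * Real.log n)) ∧
        (∀ i : Fin n, d ≤ (i : ℕ) →
          eigDesc (Matrix.of fun a b : Fin n => ⟪X a ω, X b ω⟫) i = 0)} :=
  eigenvalues_of_P_concentrate_general μ hn X hindep hident hball M hM
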